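/- arXiv:2001.11162 — 9 statements merged into one kernel-verified Lean document; each statement's English description precedes it below -/
import Mathlib

section
/- Let 𝒩₁ be a finite index set, and for each n ∈ 𝒩₁ let λ_n ∈ [0,1] and let Â_n ≥ 1 be an integer. Let V : ∏_{n∈𝒩₁}{1,…,Â_n} → ℝ be non-decreasing in each coordinate. Then the map A ↦ E[V(A')], where the coordinates A'_n are independent with A'_n = 1 with probability λ_n and A'_n = min(A_n+1, Â_n) with probability 1−λ_n, is non-decreasing in each coordinate A_n. (The product device-age kernel preserves componentwise-monotone functions.) -/
open Finset

/-- The product device-age kernel preserves componentwise-monotone functions: if `V` is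
non-decreasing in each coordinate on the valid age box `∏ₙ {1,…,Âₙ}`, then
`A ↦ E[V(A')]` — where independently, each coordinate `A'ₙ = 1` with probability `λₙ` and
`A'ₙ = min(Aₙ+1, Âₙ)` with probability `1−λₙ` — is non-decreasing in each coordinate.
The expectation is written as a sum over the set `S` of devices receiving arrivals. -/
theorem stmt1 {ι : Type*} [Fintype ι] [DecidableEq ι]
    (lam : ι → ℝ) (hlam : ∀ n, 0 ≤ lam n ∧ lam n ≤ 1)
    (Ahat : ι → ℕ) (hAhat : ∀ n, 1 ≤ Ahat n)
    (V : (ι → ℕ) → ℝ)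
    (hV : ∀ A A' : ι → ℕ, (∀ n, 1 ≤ A n ∧ A n ≤ Ahat n) →
      (∀ n, 1 ≤ A' n ∧ A' n ≤ Ahat n) → (∀ n, A n ≤ A' n) → V A ≤ V A')
    (A A' : ι → ℕ)
    (hA : ∀ n, 1 ≤ A n ∧ A n ≤ Ahat n) (hA' : ∀ n, 1 ≤ A' n ∧ A' n ≤ Ahat n)
    (hle : ∀ n, A n ≤ A' n) :
    ∑ S : Finset ι, ((∏ n ∈ S, lam n) * ∏ n ∈ Sᶜ, (1 - lam n)) *
        V (fun n => if n ∈ S then 1 else min (A n + 1) (Ahat n)) ≤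
    ∑ S : Finset ι, ((∏ n ∈ S, lam n) * ∏ n ∈ Sᶜ, (1 - lam n)) *
        V (fun n => if n ∈ S then 1 else min (A' n + 1) (Ahat n)) := by
  apply Finset.sum_le_sum
  intro S _
  have hw : 0 ≤ (∏ n ∈ S, lam n) * ∏ n ∈ Sᶜ, (1 - lam n) := by
    apply mul_nonneg
    · exact Finset.prod_nonneg fun n _ => (hlam n).1
    · exact Finset.prod_nonneg fun n _ => by linarith [(hlam n).2]
  apply mul_le_mul_of_nonneg_left _ hw
  apply hV
  · intro n
    by_cases h : n ∈ S <;> simp [h, hAhat n, le_min_iff, Nat.succ_le_iff]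
  · intro n
    by_cases h : n ∈ S <;> simp [h, hAhat n, le_min_iff, Nat.succ_le_iff]
  · intro n
    by_cases h : n ∈ S <;> simp [h]
    exact Or.inl (hle n)
end

section
/- If V is non-decreasing in its destination-age argument Δ (for every fixed A and h), then the Bellman image T V is non-decreasing in Δ (for every fixed A and h). -/
open Finset

/-- Validity of a device-age vector: ages in `{1,…,Âₙ}` for type-I devices (those in `N1`),
and age `0` for type-II devices. -/
def validAge {N : Type*} (N1 : Finset N) (Ahat : N → ℕ) (A : N → ℕ) : Prop :=
  (∀ n ∈ N1, 1 ≤ A n ∧ A n ≤ Ahat n) ∧ ∀ n ∉ N1, A n = 0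

/-- Destination-age update `D(A,Δ,u)`: if `u` is a full schedule (`|u| = M`), the new age is
`min(maxₙ uₙ·Aₙ + 1, Δ̂)`; otherwise it is `min(Δ+1, Δ̂)`. Actions are encoded as the
finset of scheduled devices. -/
def destUpdate {N : Type*} (M Δhat : ℕ) (A : N → ℕ) (Δ : ℕ) (u : Finset N) : ℕ :=
  if u.card = M then min (u.sup A + 1) Δhat else min (Δ + 1) Δhat

/-- Next device-age vector given that the set `S ⊆ N1` of type-I devices receives
fresh status packets. -/
def nextAge {N : Type*} [DecidableEq N] (N1 : Finset N) (Ahat : N → ℕ)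
    (S : Finset N) (A : N → ℕ) : N → ℕ :=
  fun n => if n ∈ N1 then (if n ∈ S then 1 else min (A n + 1) (Ahat n)) else 0

/-- Probability that exactly the devices in `S` receive arrivals. -/
noncomputable def arrWeight {N : Type*} [DecidableEq N] (N1 : Finset N) (lam : N → ℝ)
    (S : Finset N) : ℝ :=
  (∏ n ∈ S, lam n) * ∏ n ∈ N1 \ S, (1 - lam n)

/-- Probability of the next channel state vector `h` under independent components. -/
noncomputable def chanWeight {N : Type*} [Fintype N] {H : N → Type*}
    (q : ∀ n, H n → ℝ) (h : ∀ n, H n) : ℝ := ∏ n, q n (h n)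

/-- One-step energy cost `c(u,h) = Σₙ βₙ uₙ (Cˢₙ + Cᵘₙ(hₙ))`. -/
noncomputable def energyCost {N : Type*} {H : N → Type*} (β Cs : N → ℝ)
    (Cu : ∀ n, H n → ℝ) (u : Finset N) (h : ∀ n, H n) : ℝ :=
  ∑ n ∈ u, β n * (Cs n + Cu n (h n))

/-- Q-function `J_V(A,Δ,h,u) = Δ + c(u,h) + E[V(A', D(A,Δ,u), h')]`. -/
noncomputable def Qfun {N : Type*} [Fintype N] [DecidableEq N] {H : N → Type*}
    [∀ n, Fintype (H n)] (N1 : Finset N) (M Δhat : ℕ) (Ahat : N → ℕ) (lam : N → ℝ)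
    (q : ∀ n, H n → ℝ) (β Cs : N → ℝ) (Cu : ∀ n, H n → ℝ)
    (V : (N → ℕ) → ℕ → (∀ n, H n) → ℝ)
    (A : N → ℕ) (Δ : ℕ) (h : ∀ n, H n) (u : Finset N) : ℝ :=
  (Δ : ℝ) + energyCost β Cs Cu u h +
    ∑ S ∈ N1.powerset, arrWeight N1 lam S *
      ∑ h' : ∀ n, H n, chanWeight q h' *
        V (nextAge N1 Ahat S A) (destUpdate M Δhat A Δ u) h'

/-- Bellman operator: `(T V)(A,Δ,h) = min over feasible u of J_V(A,Δ,h,u)`. -/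
noncomputable def bellman {N : Type*} [Fintype N] [DecidableEq N] {H : N → Type*}
    [∀ n, Fintype (H n)] (N1 : Finset N) (M Δhat : ℕ) (Ahat : N → ℕ) (lam : N → ℝ)
    (q : ∀ n, H n → ℝ) (β Cs : N → ℝ) (Cu : ∀ n, H n → ℝ)
    (V : (N → ℕ) → ℕ → (∀ n, H n) → ℝ) :
    (N → ℕ) → ℕ → (∀ n, H n) → ℝ :=
  fun A Δ h =>
    (Finset.univ.filter (fun u : Finset N => u.card ≤ M)).inf'
      ⟨∅, by simp⟩ (Qfun N1 M Δhat Ahat lam q β Cs Cu V A Δ h)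

/-- `u` is optimal at state `(A,Δ,h)` under `V`. -/
def isOptimal {N : Type*} [Fintype N] [DecidableEq N] {H : N → Type*}
    [∀ n, Fintype (H n)] (N1 : Finset N) (M Δhat : ℕ) (Ahat : N → ℕ) (lam : N → ℝ)
    (q : ∀ n, H n → ℝ) (β Cs : N → ℝ) (Cu : ∀ n, H n → ℝ)
    (V : (N → ℕ) → ℕ → (∀ n, H n) → ℝ)
    (A : N → ℕ) (Δ : ℕ) (h : ∀ n, H n) (u : Finset N) : Prop :=
  ∀ v : Finset N, v.card ≤ M →
    Qfun N1 M Δhat Ahat lam q β Cs Cu V A Δ h u ≤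
    Qfun N1 M Δhat Ahat lam q β Cs Cu V A Δ h v

/-!
For a fixed action `u`, the destination age `Δ` enters `J_V(A,Δ,h,u)` only through the running
cost `Δ` and the next destination age `D(A,Δ,u)`, both monotone in `Δ`. Since `D` takes values in
`{1,…,Δ̂}` and the next device ages are always valid, the monotonicity of `V` applies inside the
expectation, whose weights are nonnegative; a minimum of monotone functions is monotone.
-/

section Monotonicity

variable {N : Type*} {H : N → Type*}

lemma destUpdate_mono {M Δhat : ℕ} {A : N → ℕ} {Δ Δ' : ℕ} (hΔ : Δ ≤ Δ') (u : Finset N) :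
    destUpdate M Δhat A Δ u ≤ destUpdate M Δhat A Δ' u := by
  unfold destUpdate
  split
  · exact le_rfl
  · exact min_le_min_right Δhat (Nat.add_le_add_right hΔ 1)

lemma one_le_destUpdate {M Δhat : ℕ} (hΔhat : 1 ≤ Δhat) (A : N → ℕ) (Δ : ℕ) (u : Finset N) :
    1 ≤ destUpdate M Δhat A Δ u := by
  unfold destUpdate
  split <;> exact le_min (Nat.le_add_left 1 _) hΔhat

lemma destUpdate_le (M Δhat : ℕ) (A : N → ℕ) (Δ : ℕ) (u : Finset N) :
    destUpdate M Δhat A Δ u ≤ Δhat := by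
  unfold destUpdate
  split <;> exact min_le_right _ _

lemma chanWeight_nonneg [Fintype N] {q : ∀ n, H n → ℝ} (hq0 : ∀ n (x : H n), 0 ≤ q n x)
    (h : ∀ n, H n) : 0 ≤ chanWeight q h :=
  prod_nonneg fun n _ => hq0 n (h n)

variable [DecidableEq N]

lemma validAge_nextAge {N1 : Finset N} {Ahat : N → ℕ} (hAhat : ∀ n ∈ N1, 1 ≤ Ahat n)
    (S : Finset N) (A : N → ℕ) : validAge N1 Ahat (nextAge N1 Ahat S A) := by
  refine ⟨fun n hn => ?_, fun n hn => if_neg hn⟩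
  simp only [nextAge, if_pos hn]
  split
  · exact ⟨le_rfl, hAhat n hn⟩
  · exact ⟨le_min (Nat.le_add_left 1 _) (hAhat n hn), min_le_right _ _⟩

lemma arrWeight_nonneg {N1 : Finset N} {lam : N → ℝ} (hlam : ∀ n ∈ N1, 0 ≤ lam n ∧ lam n ≤ 1)
    {S : Finset N} (hS : S ⊆ N1) : 0 ≤ arrWeight N1 lam S :=
  mul_nonneg (prod_nonneg fun n hn => (hlam n (hS hn)).1)
    (prod_nonneg fun n hn => sub_nonneg.2 (hlam n (mem_sdiff.1 hn).1).2)

variable [Fintype N] [∀ n, Fintype (H n)] {N1 : Finset N} {M Δhat : ℕ} {Ahat : N → ℕ}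
  {lam : N → ℝ} {q : ∀ n, H n → ℝ} {β Cs : N → ℝ} {Cu : ∀ n, H n → ℝ}
  {V : (N → ℕ) → ℕ → (∀ n, H n) → ℝ}

lemma Qfun_mono (hlam : ∀ n ∈ N1, 0 ≤ lam n ∧ lam n ≤ 1) (hq0 : ∀ n (x : H n), 0 ≤ q n x)
    {A : N → ℕ} {Δ Δ' : ℕ} (hΔ : Δ ≤ Δ') (h : ∀ n, H n) (u : Finset N)
    (hV : ∀ S ⊆ N1, ∀ h', V (nextAge N1 Ahat S A) (destUpdate M Δhat A Δ u) h' ≤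
      V (nextAge N1 Ahat S A) (destUpdate M Δhat A Δ' u) h') :
    Qfun N1 M Δhat Ahat lam q β Cs Cu V A Δ h u ≤
      Qfun N1 M Δhat Ahat lam q β Cs Cu V A Δ' h u := by
  unfold Qfun
  gcongr ?_ + _ + ∑ S ∈ _, _ * ∑ h', _ * ?_ with S hS h' _
  · exact_mod_cast hΔ
  · exact arrWeight_nonneg hlam (mem_powerset.1 hS)
  · exact chanWeight_nonneg hq0 h'
  · exact hV S (mem_powerset.1 hS) h'

lemma bellman_mono_of_Qfun_mono {A : N → ℕ} {Δ Δ' : ℕ} {h : ∀ n, H n}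
    (hQ : ∀ u : Finset N, Qfun N1 M Δhat Ahat lam q β Cs Cu V A Δ h u ≤
      Qfun N1 M Δhat Ahat lam q β Cs Cu V A Δ' h u) :
    bellman N1 M Δhat Ahat lam q β Cs Cu V A Δ h ≤
      bellman N1 M Δhat Ahat lam q β Cs Cu V A Δ' h :=
  inf'_mono_fun fun u _ => hQ u

end Monotonicity

theorem stmt4_general
    {N : Type*} [Fintype N] [DecidableEq N] {H : N → Type*}
    [∀ n, Fintype (H n)]
    (N1 : Finset N) (M Δhat : ℕ) (Ahat : N → ℕ) (lam : N → ℝ)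
    (q : ∀ n, H n → ℝ) (β Cs : N → ℝ) (Cu : ∀ n, H n → ℝ)
    (hΔhat : 1 ≤ Δhat)
    (hAhat : ∀ n ∈ N1, 1 ≤ Ahat n)
    (hlam : ∀ n ∈ N1, 0 ≤ lam n ∧ lam n ≤ 1)
    (hq0 : ∀ n (x : H n), 0 ≤ q n x)
    (V : (N → ℕ) → ℕ → (∀ n, H n) → ℝ)
    (hV : ∀ (A : N → ℕ) (h : ∀ n, H n) (Δ Δ' : ℕ), validAge N1 Ahat A →
      1 ≤ Δ → Δ ≤ Δ' → Δ' ≤ Δhat → V A Δ h ≤ V A Δ' h)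
    (A : N → ℕ) (h : ∀ n, H n)
    (Δ Δ' : ℕ) (h2 : Δ ≤ Δ') :
    bellman N1 M Δhat Ahat lam q β Cs Cu V A Δ h ≤
    bellman N1 M Δhat Ahat lam q β Cs Cu V A Δ' h := by
  refine bellman_mono_of_Qfun_mono fun u => Qfun_mono hlam hq0 h2 h u fun S _ h' => ?_
  exact hV _ h' _ _ (validAge_nextAge hAhat S A) (one_le_destUpdate hΔhat A Δ u)
    (destUpdate_mono h2 u) (destUpdate_le M Δhat A Δ' u)

/-- If `V` is non-decreasing in its destination-age argument `Δ` (for every fixed valid `A`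
and `h`), then the Bellman image `T V` is non-decreasing in `Δ` (for every fixed `A`, `h`). -/
theorem stmt4
    {N : Type*} [Fintype N] [DecidableEq N] {H : N → Type*}
    [∀ n, Fintype (H n)] [∀ n, LinearOrder (H n)]
    (N1 : Finset N) (M Δhat : ℕ) (Ahat : N → ℕ) (lam : N → ℝ)
    (q : ∀ n, H n → ℝ) (β Cs : N → ℝ) (Cu : ∀ n, H n → ℝ)
    (hM1 : 1 ≤ M) (hM2 : M ≤ Fintype.card N) (hΔhat : 1 ≤ Δhat)
    (hAhat : ∀ n ∈ N1, 1 ≤ Ahat n)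
    (hlam : ∀ n ∈ N1, 0 ≤ lam n ∧ lam n ≤ 1)
    (hq0 : ∀ n (x : H n), 0 ≤ q n x) (hq1 : ∀ n, ∑ x : H n, q n x = 1)
    (hCu0 : ∀ n (x : H n), 0 ≤ Cu n x) (hCuA : ∀ n, Antitone (Cu n))
    (hCs0 : ∀ n, 0 ≤ Cs n) (hCsI : ∀ n ∈ N1, Cs n = 0)
    (hβ : ∀ n, 0 < β n)
    (V : (N → ℕ) → ℕ → (∀ n, H n) → ℝ)
    (hV : ∀ (A : N → ℕ) (h : ∀ n, H n) (Δ Δ' : ℕ), validAge N1 Ahat A →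
      1 ≤ Δ → Δ ≤ Δ' → Δ' ≤ Δhat → V A Δ h ≤ V A Δ' h)
    (A : N → ℕ) (hA : validAge N1 Ahat A) (h : ∀ n, H n)
    (Δ Δ' : ℕ) (h1 : 1 ≤ Δ) (h2 : Δ ≤ Δ') (h3 : Δ' ≤ Δhat) :
    bellman N1 M Δhat Ahat lam q β Cs Cu V A Δ h ≤
    bellman N1 M Δhat Ahat lam q β Cs Cu V A Δ' h :=
  stmt4_general N1 M Δhat Ahat lam q β Cs Cu hΔhat hAhat hlam hq0 V hV A h Δ Δ' h2
end

section
/- For every real-valued function V on states, the Bellman image T V is non-increasing in each channel coordinate h_n, n ∈ 𝒩 (for every fixed A and Δ): if h and h' agree except that h_n ≤ h'_n in the order on H_n, then (T V)(A,Δ,h) ≥ (T V)(A,Δ,h'). -/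
open Finset

/-- For every real-valued function `V` on states, the Bellman image `T V` is non-increasing
in each channel coordinate `hₙ` (for fixed `A` and `Δ`): if `h` and `h'` agree except that
`h n ≤ h' n`, then `(T V)(A,Δ,h) ≥ (T V)(A,Δ,h')`. -/
theorem stmt6
    {N : Type*} [Fintype N] [DecidableEq N] {H : N → Type*}
    [∀ n, Fintype (H n)] [∀ n, LinearOrder (H n)]
    (N1 : Finset N) (M Δhat : ℕ) (Ahat : N → ℕ) (lam : N → ℝ)
    (q : ∀ n, H n → ℝ) (β Cs : N → ℝ) (Cu : ∀ n, H n → ℝ)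
    (hM1 : 1 ≤ M) (hM2 : M ≤ Fintype.card N) (hΔhat : 1 ≤ Δhat)
    (hAhat : ∀ n ∈ N1, 1 ≤ Ahat n)
    (hlam : ∀ n ∈ N1, 0 ≤ lam n ∧ lam n ≤ 1)
    (hq0 : ∀ n (x : H n), 0 ≤ q n x) (hq1 : ∀ n, ∑ x : H n, q n x = 1)
    (hCu0 : ∀ n (x : H n), 0 ≤ Cu n x) (hCuA : ∀ n, Antitone (Cu n))
    (hCs0 : ∀ n, 0 ≤ Cs n) (hCsI : ∀ n ∈ N1, Cs n = 0)
    (hβ : ∀ n, 0 < β n)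
    (V : (N → ℕ) → ℕ → (∀ n, H n) → ℝ)
    (A : N → ℕ) (hA : validAge N1 Ahat A)
    (Δ : ℕ) (h1 : 1 ≤ Δ) (h2 : Δ ≤ Δhat)
    (n : N) (h h' : ∀ m, H m)
    (hagree : ∀ m, m ≠ n → h m = h' m) (hle : h n ≤ h' n) :
    bellman N1 M Δhat Ahat lam q β Cs Cu V A Δ h' ≤
    bellman N1 M Δhat Ahat lam q β Cs Cu V A Δ h := by
  have key : ∀ u : Finset N,
      Qfun N1 M Δhat Ahat lam q β Cs Cu V A Δ h' u ≤
      Qfun N1 M Δhat Ahat lam q β Cs Cu V A Δ h u := by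
    intro u
    unfold Qfun
    gcongr _ + ?_ + _
    unfold energyCost
    apply Finset.sum_le_sum
    intro m hm
    by_cases hmn : m = n
    · subst hmn
      have := hCuA m hle
      have hb := (hβ m).le
      nlinarith
    · rw [hagree m hmn]
  unfold bellman
  obtain ⟨u, hu, heq⟩ := Finset.exists_mem_eq_inf'
    (⟨∅, by simp⟩ : (Finset.univ.filter (fun u : Finset N => u.card ≤ M)).Nonempty)
    (Qfun N1 M Δhat Ahat lam q β Cs Cu V A Δ h)
  rw [heq]
  exact le_trans (Finset.inf'_le _ hu) (key u)
end

section
/- Suppose V is non-decreasing in its destination-age argument Δ (for every fixed A and h). Then for every device-age vector A, channel state h, and full schedule u (Σ_n u_n = M), the function Δ ↦ J_V(A,Δ,h,u) − J_V(A,Δ,h,0) is non-increasing on {1,…,Δ̂}, where 0 denotes the all-zero (idle) action. -/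
open Finset

/-- If `V` is non-decreasing in its destination-age argument, then for every device-age
vector `A`, channel state `h`, and full schedule `u`, the function
`Δ ↦ J_V(A,Δ,h,u) − J_V(A,Δ,h,0)` is non-increasing on `{1,…,Δ̂}` (idle action = `∅`). -/
theorem stmt9
    {N : Type*} [Fintype N] [DecidableEq N] {H : N → Type*}
    [∀ n, Fintype (H n)] [∀ n, LinearOrder (H n)]
    (N1 : Finset N) (M Δhat : ℕ) (Ahat : N → ℕ) (lam : N → ℝ)
    (q : ∀ n, H n → ℝ) (β Cs : N → ℝ) (Cu : ∀ n, H n → ℝ)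
    (hM1 : 1 ≤ M) (hM2 : M ≤ Fintype.card N) (hΔhat : 1 ≤ Δhat)
    (hAhat : ∀ n ∈ N1, 1 ≤ Ahat n)
    (hlam : ∀ n ∈ N1, 0 ≤ lam n ∧ lam n ≤ 1)
    (hq0 : ∀ n (x : H n), 0 ≤ q n x) (hq1 : ∀ n, ∑ x : H n, q n x = 1)
    (hCu0 : ∀ n (x : H n), 0 ≤ Cu n x) (hCuA : ∀ n, Antitone (Cu n))
    (hCs0 : ∀ n, 0 ≤ Cs n) (hCsI : ∀ n ∈ N1, Cs n = 0)
    (hβ : ∀ n, 0 < β n)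
    (V : (N → ℕ) → ℕ → (∀ n, H n) → ℝ)
    (hV : ∀ (A : N → ℕ) (h : ∀ n, H n) (Δ Δ' : ℕ), validAge N1 Ahat A →
      1 ≤ Δ → Δ ≤ Δ' → Δ' ≤ Δhat → V A Δ h ≤ V A Δ' h)
    (A : N → ℕ) (hA : validAge N1 Ahat A) (h : ∀ n, H n)
    (u : Finset N) (hu : u.card = M)
    (Δ Δ' : ℕ) (h1 : 1 ≤ Δ) (h2 : Δ ≤ Δ') (h3 : Δ' ≤ Δhat) :
    Qfun N1 M Δhat Ahat lam q β Cs Cu V A Δ' h u -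
      Qfun N1 M Δhat Ahat lam q β Cs Cu V A Δ' h ∅ ≤
    Qfun N1 M Δhat Ahat lam q β Cs Cu V A Δ h u -
      Qfun N1 M Δhat Ahat lam q β Cs Cu V A Δ h ∅ := by
  have hempty : (∅ : Finset N).card ≠ M := by simp; omega
  have hDu : ∀ d : ℕ, destUpdate M Δhat A d u = min (u.sup A + 1) Δhat := by
    intro d; simp [destUpdate, hu]
  have hDe : ∀ d : ℕ, destUpdate M Δhat A d (∅ : Finset N) = min (d + 1) Δhat := by
    intro d; rw [destUpdate, if_neg hempty]
  have hVA : ∀ S : Finset N, validAge N1 Ahat (nextAge N1 Ahat S A) := by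
    intro S
    constructor
    · intro n hn
      simp only [nextAge, if_pos hn]
      by_cases hS : n ∈ S
      · simp [hS, hAhat n hn]
      · simp only [if_neg hS]
        have h1 := (hA.1 n hn).1
        exact ⟨le_min (by omega) (hAhat n hn), min_le_right _ _⟩
    · intro n hn; simp [nextAge, hn]
  have key : ∀ d d' : ℕ, 1 ≤ d → d ≤ d' → d' ≤ Δhat →
      (∑ S ∈ N1.powerset, arrWeight N1 lam S *
        ∑ h' : ∀ n, H n, chanWeight q h' *
          V (nextAge N1 Ahat S A) d h') ≤
      (∑ S ∈ N1.powerset, arrWeight N1 lam S *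
        ∑ h' : ∀ n, H n, chanWeight q h' *
          V (nextAge N1 Ahat S A) d' h') := by
    intro d d' hd hdd hd'
    refine Finset.sum_le_sum fun S hS => ?_
    have hSsub : S ⊆ N1 := Finset.mem_powerset.mp hS
    have hw : 0 ≤ arrWeight N1 lam S := by
      apply mul_nonneg
      · exact Finset.prod_nonneg fun n hn => (hlam n (hSsub hn)).1
      · exact Finset.prod_nonneg fun n hn => by
          have := (hlam n (Finset.mem_sdiff.mp hn).1).2; linarith
    refine mul_le_mul_of_nonneg_left ?_ hw
    refine Finset.sum_le_sum fun h' _ => ?_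
    have hc : 0 ≤ chanWeight q h' := Finset.prod_nonneg fun n _ => hq0 n (h' n)
    exact mul_le_mul_of_nonneg_left (hV _ _ _ _ (hVA S) hd hdd hd') hc
  simp only [Qfun, hDu, hDe]
  have hmin : min (Δ + 1) Δhat ≤ min (Δ' + 1) Δhat := by omega
  have hmin1 : 1 ≤ min (Δ + 1) Δhat := by omega
  have hmin2 : min (Δ' + 1) Δhat ≤ Δhat := min_le_right _ _
  have := key (min (Δ + 1) Δhat) (min (Δ' + 1) Δhat) hmin1 hmin hmin2
  linarith
end

section
/- (Theorem 1, threshold structure.) Suppose V is non-decreasing in its destination-age argument Δ (for every fixed A and h). Let u* be a full schedule (Σ_n u*_n = M) that is optimal at (A, Δ₀, h) under V, i.e., J_V(A,Δ₀,h,u*) ≤ J_V(A,Δ₀,h,v) for every feasible action v. Then u* is optimal at (A, Δ, h) under V for every Δ with Δ₀ ≤ Δ ≤ Δ̂. Consequently, the set Φ_{u*}(A,h) of destination ages at which u* is optimal is upward closed in {1,…,Δ̂}, so u* is optimal at (A,Δ,h) whenever Δ ≥ min Φ_{u*}(A,h). -/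
open Finset

/-- Expected continuation value as a function of the destination age `d`. -/
noncomputable def EVal {N : Type*} [Fintype N] [DecidableEq N] {H : N → Type*}
    [∀ n, Fintype (H n)] (N1 : Finset N) (Ahat : N → ℕ) (lam : N → ℝ)
    (q : ∀ n, H n → ℝ) (V : (N → ℕ) → ℕ → (∀ n, H n) → ℝ)
    (A : N → ℕ) (d : ℕ) : ℝ :=
  ∑ S ∈ N1.powerset, arrWeight N1 lam S *
    ∑ h' : ∀ n, H n, chanWeight q h' * V (nextAge N1 Ahat S A) d h'

lemma Qfun_eq_EVal {N : Type*} [Fintype N] [DecidableEq N] {H : N → Type*}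
    [∀ n, Fintype (H n)] (N1 : Finset N) (M Δhat : ℕ) (Ahat : N → ℕ) (lam : N → ℝ)
    (q : ∀ n, H n → ℝ) (β Cs : N → ℝ) (Cu : ∀ n, H n → ℝ)
    (V : (N → ℕ) → ℕ → (∀ n, H n) → ℝ)
    (A : N → ℕ) (Δ : ℕ) (h : ∀ n, H n) (u : Finset N) :
    Qfun N1 M Δhat Ahat lam q β Cs Cu V A Δ h u =
      (Δ : ℝ) + energyCost β Cs Cu u h +
        EVal N1 Ahat lam q V A (destUpdate M Δhat A Δ u) := rfl

lemma nextAge_valid {N : Type*} [DecidableEq N] (N1 : Finset N) (Ahat : N → ℕ)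
    (hAhat : ∀ n ∈ N1, 1 ≤ Ahat n) (S : Finset N) (A : N → ℕ)
    (hA : validAge N1 Ahat A) : validAge N1 Ahat (nextAge N1 Ahat S A) := by
  constructor
  · intro n hn
    simp only [nextAge, if_pos hn]
    split
    · exact ⟨le_refl 1, hAhat n hn⟩
    · have h1 := hA.1 n hn
      have h2 := hAhat n hn
      exact ⟨le_min (by omega) h2, min_le_right _ _⟩
  · intro n hn; simp [nextAge, hn]

/-- Theorem 1 (threshold structure): if `V` is non-decreasing in the destination age and the
full schedule `u*` is optimal at `(A,Δ₀,h)` under `V`, then `u*` is optimal at `(A,Δ,h)` for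
every `Δ₀ ≤ Δ ≤ Δ̂`.  Consequently the set `Φ_{u*}(A,h)` of destination ages at which `u*`
is optimal is upward closed in `{1,…,Δ̂}`, so `u*` is optimal at `(A,Δ,h)` whenever
`Δ ≥ min Φ_{u*}(A,h)` (the minimum, in `ℕ∞`, of the empty set being `+∞`). -/
theorem stmt10
    {N : Type*} [Fintype N] [DecidableEq N] {H : N → Type*}
    [∀ n, Fintype (H n)] [∀ n, LinearOrder (H n)]
    (N1 : Finset N) (M Δhat : ℕ) (Ahat : N → ℕ) (lam : N → ℝ)
    (q : ∀ n, H n → ℝ) (β Cs : N → ℝ) (Cu : ∀ n, H n → ℝ)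
    (hM1 : 1 ≤ M) (hM2 : M ≤ Fintype.card N) (hΔhat : 1 ≤ Δhat)
    (hAhat : ∀ n ∈ N1, 1 ≤ Ahat n)
    (hlam : ∀ n ∈ N1, 0 ≤ lam n ∧ lam n ≤ 1)
    (hq0 : ∀ n (x : H n), 0 ≤ q n x) (hq1 : ∀ n, ∑ x : H n, q n x = 1)
    (hCu0 : ∀ n (x : H n), 0 ≤ Cu n x) (hCuA : ∀ n, Antitone (Cu n))
    (hCs0 : ∀ n, 0 ≤ Cs n) (hCsI : ∀ n ∈ N1, Cs n = 0)
    (hβ : ∀ n, 0 < β n)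
    (V : (N → ℕ) → ℕ → (∀ n, H n) → ℝ)
    (hV : ∀ (A : N → ℕ) (h : ∀ n, H n) (Δ Δ' : ℕ), validAge N1 Ahat A →
      1 ≤ Δ → Δ ≤ Δ' → Δ' ≤ Δhat → V A Δ h ≤ V A Δ' h)
    (A : N → ℕ) (hA : validAge N1 Ahat A) (h : ∀ n, H n)
    (ustar : Finset N) (hfull : ustar.card = M)
    (Δ₀ : ℕ) (hΔ₀1 : 1 ≤ Δ₀) (hΔ₀2 : Δ₀ ≤ Δhat)
    (hopt : isOptimal N1 M Δhat Ahat lam q β Cs Cu V A Δ₀ h ustar) :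
    (∀ Δ : ℕ, Δ₀ ≤ Δ → Δ ≤ Δhat →
      isOptimal N1 M Δhat Ahat lam q β Cs Cu V A Δ h ustar) ∧
    (∀ Δ : ℕ, 1 ≤ Δ → Δ ≤ Δhat →
      sInf {d : ℕ∞ | ∃ m : ℕ, d = (m : ℕ∞) ∧ 1 ≤ m ∧ m ≤ Δhat ∧
        isOptimal N1 M Δhat Ahat lam q β Cs Cu V A m h ustar} ≤ (Δ : ℕ∞) →
      isOptimal N1 M Δhat Ahat lam q β Cs Cu V A Δ h ustar) := by
  -- nonnegativity of the probability weights
  have harr : ∀ S ∈ N1.powerset, 0 ≤ arrWeight N1 lam S := by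
    intro S hS
    rw [Finset.mem_powerset] at hS
    refine mul_nonneg (Finset.prod_nonneg fun n hn => (hlam n (hS hn)).1)
      (Finset.prod_nonneg fun n hn => ?_)
    have := (hlam n (Finset.mem_sdiff.mp hn).1).2
    linarith
  have hchan : ∀ h' : ∀ n, H n, 0 ≤ chanWeight q h' :=
    fun h' => Finset.prod_nonneg fun n _ => hq0 n (h' n)
  -- monotonicity of the expected continuation value in the destination age
  have hEV : ∀ d d' : ℕ, 1 ≤ d → d ≤ d' → d' ≤ Δhat →
      EVal N1 Ahat lam q V A d ≤ EVal N1 Ahat lam q V A d' := by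
    intro d d' h1 h2 h3
    refine Finset.sum_le_sum fun S hS => mul_le_mul_of_nonneg_left ?_ (harr S hS)
    refine Finset.sum_le_sum fun h' _ => mul_le_mul_of_nonneg_left ?_ (hchan h')
    exact hV _ _ d d' (nextAge_valid N1 Ahat hAhat S A hA) h1 h2 h3
  -- key lemma: optimality propagates upward in Δ
  have key : ∀ Δ₁ : ℕ, 1 ≤ Δ₁ → Δ₁ ≤ Δhat →
      isOptimal N1 M Δhat Ahat lam q β Cs Cu V A Δ₁ h ustar →
      ∀ Δ : ℕ, Δ₁ ≤ Δ → Δ ≤ Δhat →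
        isOptimal N1 M Δhat Ahat lam q β Cs Cu V A Δ h ustar := by
    intro Δ₁ h1 h2 hopt1 Δ hle hΔle v hv
    have hQ1 := hopt1 v hv
    rw [Qfun_eq_EVal, Qfun_eq_EVal] at hQ1 ⊢
    have hDu : ∀ Δ' : ℕ, destUpdate M Δhat A Δ' ustar = min (ustar.sup A + 1) Δhat := by
      intro Δ'; simp [destUpdate, hfull]
    simp only [hDu] at hQ1 ⊢
    by_cases hvf : v.card = M
    · have hDv : ∀ Δ' : ℕ, destUpdate M Δhat A Δ' v = min (v.sup A + 1) Δhat := by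
        intro Δ'; simp [destUpdate, hvf]
      simp only [hDv] at hQ1 ⊢
      have hc : (Δ₁ : ℝ) ≤ (Δ : ℝ) := by exact_mod_cast hle
      linarith
    · have hDv : ∀ Δ' : ℕ, destUpdate M Δhat A Δ' v = min (Δ' + 1) Δhat := by
        intro Δ'; simp [destUpdate, hvf]
      simp only [hDv] at hQ1 ⊢
      have hmono : EVal N1 Ahat lam q V A (min (Δ₁ + 1) Δhat) ≤
          EVal N1 Ahat lam q V A (min (Δ + 1) Δhat) := by
        refine hEV _ _ ?_ ?_ (min_le_right _ _)
        · exact le_min (by omega) hΔhat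
        · exact min_le_min (by omega) le_rfl
      have hc : (Δ₁ : ℝ) ≤ (Δ : ℝ) := by exact_mod_cast hle
      linarith
  refine ⟨key Δ₀ hΔ₀1 hΔ₀2 hopt, ?_⟩
  intro Δ h1Δ h2Δ hsInf
  by_cases hex : ∃ m : ℕ, m ≤ Δ ∧ 1 ≤ m ∧ m ≤ Δhat ∧
      isOptimal N1 M Δhat Ahat lam q β Cs Cu V A m h ustar
  · obtain ⟨m, hmΔ, hm1, hm3, hmo⟩ := hex
    exact key m hm1 hm3 hmo Δ hmΔ h2Δ
  · exfalso
    push_neg at hex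
    have hge : ((Δ : ℕ∞) + 1) ≤ sInf {d : ℕ∞ | ∃ m : ℕ, d = (m : ℕ∞) ∧ 1 ≤ m ∧ m ≤ Δhat ∧
        isOptimal N1 M Δhat Ahat lam q β Cs Cu V A m h ustar} := by
      refine le_sInf ?_
      rintro d ⟨m, rfl, hm1, hm2, hmo⟩
      have : ¬ m ≤ Δ := fun hmΔ => (hex m hmΔ hm1 hm2) hmo
      have : Δ + 1 ≤ m := by omega
      exact_mod_cast this
    have : ((Δ : ℕ∞) + 1) ≤ (Δ : ℕ∞) := le_trans hge hsInf
    have : Δ + 1 ≤ Δ := by exact_mod_cast this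
    omega
end

section
/- (Theorem 1, monotonicity of the threshold in the channel state.) Let V be any real-valued function on states, let u* be a full schedule (Σ_n u*_n = M), and let n ∈ 𝒩 be a device with u*_n = 1. Suppose u* is optimal at (A, Δ, h) under V, and let h' be a channel vector that agrees with h in every coordinate except possibly the n-th, where h_n ≤ h'_n in the order on H_n. Then u* is optimal at (A, Δ, h') under V. Consequently, the threshold φ_{u*}(A,h) := min{Δ ∈ {1,…,Δ̂} : u* is optimal at (A,Δ,h)} (with min ∅ := +∞) satisfies φ_{u*}(A,h') ≤ φ_{u*}(A,h), i.e., the threshold is non-increasing in the channel condition h_n of each scheduled device. -/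
open Finset

/-- Theorem 1 (monotonicity of the threshold in the channel state): let `u*` be a full
schedule and `n ∈ u*` a scheduled device; let `h'` agree with `h` except possibly at
coordinate `n` where `h n ≤ h' n`.  Then (i) whenever `u*` is optimal at `(A,Δ,h)` under
`V`, it is also optimal at `(A,Δ,h')`; consequently (ii) the threshold
`φ_{u*}(A,h) := min{Δ ∈ {1,…,Δ̂} : u* optimal at (A,Δ,h)}` (in `ℕ∞`, with `min ∅ = +∞`)
satisfies `φ_{u*}(A,h') ≤ φ_{u*}(A,h)`. -/
theorem stmt11
    {N : Type*} [Fintype N] [DecidableEq N] {H : N → Type*}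
    [∀ n, Fintype (H n)] [∀ n, LinearOrder (H n)]
    (N1 : Finset N) (M Δhat : ℕ) (Ahat : N → ℕ) (lam : N → ℝ)
    (q : ∀ n, H n → ℝ) (β Cs : N → ℝ) (Cu : ∀ n, H n → ℝ)
    (hM1 : 1 ≤ M) (hM2 : M ≤ Fintype.card N) (hΔhat : 1 ≤ Δhat)
    (hAhat : ∀ n ∈ N1, 1 ≤ Ahat n)
    (hlam : ∀ n ∈ N1, 0 ≤ lam n ∧ lam n ≤ 1)
    (hq0 : ∀ n (x : H n), 0 ≤ q n x) (hq1 : ∀ n, ∑ x : H n, q n x = 1)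
    (hCu0 : ∀ n (x : H n), 0 ≤ Cu n x) (hCuA : ∀ n, Antitone (Cu n))
    (hCs0 : ∀ n, 0 ≤ Cs n) (hCsI : ∀ n ∈ N1, Cs n = 0)
    (hβ : ∀ n, 0 < β n)
    (V : (N → ℕ) → ℕ → (∀ n, H n) → ℝ)
    (A : N → ℕ) (hA : validAge N1 Ahat A)
    (ustar : Finset N) (hfull : ustar.card = M)
    (n : N) (hn : n ∈ ustar)
    (h h' : ∀ m, H m) (hagree : ∀ m, m ≠ n → h m = h' m) (hle : h n ≤ h' n) :
    (∀ Δ : ℕ, 1 ≤ Δ → Δ ≤ Δhat →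
      isOptimal N1 M Δhat Ahat lam q β Cs Cu V A Δ h ustar →
      isOptimal N1 M Δhat Ahat lam q β Cs Cu V A Δ h' ustar) ∧
    sInf {d : ℕ∞ | ∃ m : ℕ, d = (m : ℕ∞) ∧ 1 ≤ m ∧ m ≤ Δhat ∧
        isOptimal N1 M Δhat Ahat lam q β Cs Cu V A m h' ustar} ≤
    sInf {d : ℕ∞ | ∃ m : ℕ, d = (m : ℕ∞) ∧ 1 ≤ m ∧ m ≤ Δhat ∧
        isOptimal N1 M Δhat Ahat lam q β Cs Cu V A m h ustar} := by
  set d : ℝ := β n * (Cu n (h' n) - Cu n (h n)) with hd_def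
  have hd0 : d ≤ 0 := by
    have : Cu n (h' n) ≤ Cu n (h n) := hCuA n hle
    have hb := (hβ n).le
    nlinarith
  have key : ∀ v : Finset N,
      energyCost β Cs Cu v h' - energyCost β Cs Cu v h = if n ∈ v then d else 0 := by
    intro v
    unfold energyCost
    rw [← Finset.sum_sub_distrib,
      Finset.sum_congr rfl
        (fun m _ => show β m * (Cs m + Cu m (h' m)) - β m * (Cs m + Cu m (h m))
            = if m = n then d else 0 from by
          by_cases hmn : m = n
          · subst hmn; rw [if_pos rfl, hd_def]; ring
          · rw [if_neg hmn, hagree m hmn]; ring),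
      Finset.sum_ite_eq' v n (fun _ => d)]
  have qdiff : ∀ (Δ : ℕ) (v : Finset N),
      Qfun N1 M Δhat Ahat lam q β Cs Cu V A Δ h' v -
      Qfun N1 M Δhat Ahat lam q β Cs Cu V A Δ h v = if n ∈ v then d else 0 := by
    intro Δ v
    have h1 : Qfun N1 M Δhat Ahat lam q β Cs Cu V A Δ h' v -
        Qfun N1 M Δhat Ahat lam q β Cs Cu V A Δ h v =
        energyCost β Cs Cu v h' - energyCost β Cs Cu v h := by
      unfold Qfun; ring
    rw [h1, key v]
  have part1 : ∀ Δ : ℕ, 1 ≤ Δ → Δ ≤ Δhat →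
      isOptimal N1 M Δhat Ahat lam q β Cs Cu V A Δ h ustar →
      isOptimal N1 M Δhat Ahat lam q β Cs Cu V A Δ h' ustar := by
    intro Δ _ _ hopt v hv
    have h1 := hopt v hv
    have h2 := qdiff Δ ustar
    have h3 := qdiff Δ v
    rw [if_pos hn] at h2
    split_ifs at h3 <;> linarith
  refine ⟨part1, sInf_le_sInf ?_⟩
  rintro d ⟨m, rfl, h1, h2, h3⟩
  exact ⟨m, rfl, h1, h2, part1 m h1 h2 h3⟩
end

section
/- (Special case, two-action reduction.) Suppose all devices are type-II, i.e., 𝒩₁ = ∅. Fix a channel state h and let u† be the indicator action of a set S ⊆ 𝒩 with |S| = M satisfying β_i·(C^s_i + C^u_i(h_i)) ≤ β_j·(C^s_j + C^u_j(h_j)) for all i ∈ S and j ∈ 𝒩∖S. Then for every real-valued function V on states and every Δ ∈ {1,…,Δ̂}, the minimum of J_V(Δ,h,u) over all feasible actions u equals min{ J_V(Δ,h,0), J_V(Δ,h,u†) }, where 0 denotes the all-zero (idle) action. In particular the Bellman minimization over the action set of size 1 + C(|𝒩|,M) reduces to a minimization over two actions. -/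
/-!
With no type-I devices every device age is `0`, so the destination-age update of an action
depends only on whether it is a full schedule.  Two actions of the same kind therefore have the
same expected future value and differ only in energy cost.  Among partial schedules the idle
action is cheapest, since costs are nonnegative; among full schedules `S` is cheapest, by
exchanging the elements of `S \ u` for the at least as expensive ones of `u \ S`.
-/

open Finset

theorem Finset.sum_le_sum_of_card_eq_of_forall_le {ι M : Type*} [DecidableEq ι]
    [AddCommMonoid M] [LinearOrder M] [IsOrderedAddMonoid M] {s t : Finset ι} {w : ι → M}
    (hcard : s.card = t.card) (hle : ∀ i ∈ s, ∀ j ∉ s, w i ≤ w j) :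
    ∑ i ∈ s, w i ≤ ∑ i ∈ t, w i := by
  have hsdiff : (s \ t).card = (t \ s).card := card_sdiff_comm hcard
  rw [← sum_inter_add_sum_sdiff s t, ← sum_inter_add_sum_sdiff t s, inter_comm]
  refine add_le_add_right ?_ _
  rcases (s \ t).eq_empty_or_nonempty with hst | hst
  · have hts : t \ s = ∅ := by rw [← card_eq_zero, ← hsdiff, hst, card_empty]
    simp [hst, hts]
  · calc ∑ i ∈ s \ t, w i ≤ (s \ t).card • (s \ t).sup' hst w :=
          sum_le_card_nsmul _ _ _ fun i hi => le_sup' w hi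
      _ = (t \ s).card • (s \ t).sup' hst w := by rw [hsdiff]
      _ ≤ ∑ j ∈ t \ s, w j := card_nsmul_le_sum _ _ _ fun j hj =>
          sup'_le hst w fun i hi => hle i (mem_sdiff.1 hi).1 j (mem_sdiff.1 hj).2

theorem Finset.inf'_eq_min_of_forall_le_or_le {α β : Type*} [LinearOrder β] {s : Finset α}
    (hs : s.Nonempty) {f : α → β} {a b : α} (ha : a ∈ s) (hb : b ∈ s)
    (h : ∀ x ∈ s, f a ≤ f x ∨ f b ≤ f x) :
    s.inf' hs f = min (f a) (f b) :=
  le_antisymm (le_min (inf'_le f ha) (inf'_le f hb)) <| le_inf' hs f fun x hx =>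
    (h x hx).elim (min_le_left _ _).trans (min_le_right _ _).trans

theorem destUpdate_zero_congr {N : Type*} {M Δhat Δ : ℕ} {u v : Finset N}
    (h : u.card = M ↔ v.card = M) :
    destUpdate M Δhat (fun _ => 0) Δ u = destUpdate M Δhat (fun _ => 0) Δ v := by
  have hsup (s : Finset N) : (s.sup fun _ => 0) = 0 := Finset.sup_bot s
  simp only [destUpdate, h, hsup]

theorem energyCost_empty_le {N : Type*} {H : N → Type*} {β Cs : N → ℝ}
    {Cu : ∀ n, H n → ℝ} {h : ∀ n, H n} (hw : ∀ n, 0 ≤ β n * (Cs n + Cu n (h n))) (u : Finset N) :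
    energyCost β Cs Cu ∅ h ≤ energyCost β Cs Cu u h := by
  simpa [energyCost] using sum_nonneg fun n _ => hw n

theorem Qfun_le_Qfun_of_destUpdate_eq {N : Type*} [Fintype N] [DecidableEq N] {H : N → Type*}
    [∀ n, Fintype (H n)] {N1 : Finset N} {M Δhat : ℕ} {Ahat : N → ℕ} {lam : N → ℝ}
    {q : ∀ n, H n → ℝ} {β Cs : N → ℝ} {Cu : ∀ n, H n → ℝ}
    {V : (N → ℕ) → ℕ → (∀ n, H n) → ℝ} {A : N → ℕ} {Δ : ℕ} {h : ∀ n, H n}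
    {u v : Finset N}
    (hD : destUpdate M Δhat A Δ u = destUpdate M Δhat A Δ v)
    (hc : energyCost β Cs Cu u h ≤ energyCost β Cs Cu v h) :
    Qfun N1 M Δhat Ahat lam q β Cs Cu V A Δ h u ≤
      Qfun N1 M Δhat Ahat lam q β Cs Cu V A Δ h v := by
  simp only [Qfun, hD]
  linarith

theorem stmt14_general {N : Type*} [Fintype N] [DecidableEq N] {H : N → Type*}
    [∀ n, Fintype (H n)]
    (M Δhat : ℕ) (Ahat : N → ℕ) (lam : N → ℝ)
    (q : ∀ n, H n → ℝ) (β Cs : N → ℝ) (Cu : ∀ n, H n → ℝ)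
    (hCu0 : ∀ n (x : H n), 0 ≤ Cu n x)
    (hCs0 : ∀ n, 0 ≤ Cs n) (hβ : ∀ n, 0 < β n)
    (h : ∀ n, H n)
    (S : Finset N) (hS : S.card = M)
    (hcheap : ∀ i ∈ S, ∀ j ∉ S,
      β i * (Cs i + Cu i (h i)) ≤ β j * (Cs j + Cu j (h j)))
    (V : (N → ℕ) → ℕ → (∀ n, H n) → ℝ)
    (Δ : ℕ) :
    bellman (∅ : Finset N) M Δhat Ahat lam q β Cs Cu V (fun _ => 0) Δ h =
      min (Qfun (∅ : Finset N) M Δhat Ahat lam q β Cs Cu V (fun _ => 0) Δ h ∅)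
        (Qfun (∅ : Finset N) M Δhat Ahat lam q β Cs Cu V (fun _ => 0) Δ h S) := by
  have hw : ∀ n, 0 ≤ β n * (Cs n + Cu n (h n)) := fun n =>
    mul_nonneg (hβ n).le (add_nonneg (hCs0 n) (hCu0 n (h n)))
  refine inf'_eq_min_of_forall_le_or_le _ (by simp) (by simp [hS]) fun u hu => ?_
  rw [mem_filter_univ] at hu
  by_cases hcard : u.card = M
  · exact .inr <| Qfun_le_Qfun_of_destUpdate_eq
      (destUpdate_zero_congr (by simp [hS, hcard]))
      (sum_le_sum_of_card_eq_of_forall_le (hS.trans hcard.symm) hcheap)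
  · exact .inl <| Qfun_le_Qfun_of_destUpdate_eq
      (destUpdate_zero_congr (by rw [card_empty]; omega))
      (energyCost_empty_le hw u)

/-- Special case with only type-II devices (`N1 = ∅`): two-action reduction.  If `u†` is the
indicator action of a set `S` of `M` devices with the smallest weighted energy costs, then
the Bellman minimum over all feasible actions equals the minimum over just the idle action
`∅` and `u†`. -/
theorem stmt14 {N : Type*} [Fintype N] [DecidableEq N] {H : N → Type*}
    [∀ n, Fintype (H n)] [∀ n, LinearOrder (H n)]
    (M Δhat : ℕ) (Ahat : N → ℕ) (lam : N → ℝ)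
    (q : ∀ n, H n → ℝ) (β Cs : N → ℝ) (Cu : ∀ n, H n → ℝ)
    (hM1 : 1 ≤ M) (hM2 : M ≤ Fintype.card N) (hΔhat : 1 ≤ Δhat)
    (hq0 : ∀ n (x : H n), 0 ≤ q n x) (hq1 : ∀ n, ∑ x : H n, q n x = 1)
    (hCu0 : ∀ n (x : H n), 0 ≤ Cu n x) (hCuA : ∀ n, Antitone (Cu n))
    (hCs0 : ∀ n, 0 ≤ Cs n) (hβ : ∀ n, 0 < β n)
    (h : ∀ n, H n)
    (S : Finset N) (hS : S.card = M)
    (hcheap : ∀ i ∈ S, ∀ j ∉ S,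
      β i * (Cs i + Cu i (h i)) ≤ β j * (Cs j + Cu j (h j)))
    (V : (N → ℕ) → ℕ → (∀ n, H n) → ℝ)
    (Δ : ℕ) (h1 : 1 ≤ Δ) (h2 : Δ ≤ Δhat) :
    bellman (∅ : Finset N) M Δhat Ahat lam q β Cs Cu V (fun _ => 0) Δ h =
      min (Qfun (∅ : Finset N) M Δhat Ahat lam q β Cs Cu V (fun _ => 0) Δ h ∅)
        (Qfun (∅ : Finset N) M Δhat Ahat lam q β Cs Cu V (fun _ => 0) Δ h S) :=
  stmt14_general M Δhat Ahat lam q β Cs Cu hCu0 hCs0 hβ h S hS hcheap V Δ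
end

section
/- (Theorem 2, threshold in the destination age.) Suppose V : {1,…,Δ̂} × 𝒞 → ℝ satisfies that V(·, c) is non-decreasing on {1,…,Δ̂} for every c ∈ 𝒞. If scheduling is optimal at (Δ₀, C) under V, then scheduling is optimal at (Δ, C) under V for every Δ with Δ₀ ≤ Δ ≤ Δ̂. Consequently, for each C ∈ 𝒞 there is a threshold ψ(C) := min{Δ ∈ {1,…,Δ̂} : C ≤ g_V(Δ)} (with min ∅ := +∞) such that scheduling is optimal at (Δ, C) if and only if Δ ≥ ψ(C). -/
open Finset

/-- Expected value function `m_V(Δ) = Σ_{c∈𝒞} p(c)·V(Δ,c)` in the reduced (only type-II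
devices) model. -/
noncomputable def mV (Cset : Finset ℝ) (p : ℝ → ℝ) (V : ℕ → ℝ → ℝ) (Δ : ℕ) : ℝ :=
  ∑ c ∈ Cset, p c * V Δ c

/-- Gain `g_V(Δ) = m_V(min(Δ+1,Δ̂)) − m_V(1)`; scheduling is optimal at `(Δ,C)` under `V`
iff `C ≤ g_V(Δ)`. -/
noncomputable def gV (Δhat : ℕ) (Cset : Finset ℝ) (p : ℝ → ℝ) (V : ℕ → ℝ → ℝ)
    (Δ : ℕ) : ℝ :=
  mV Cset p V (min (Δ + 1) Δhat) - mV Cset p V 1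

/-- Reduced Bellman operator `(T V)(Δ,C) = Δ + min{m_V(min(Δ+1,Δ̂)), C + m_V(1)}`. -/
noncomputable def reducedBellman (Δhat : ℕ) (Cset : Finset ℝ) (p : ℝ → ℝ)
    (V : ℕ → ℝ → ℝ) : ℕ → ℝ → ℝ :=
  fun Δ C => (Δ : ℝ) + min (mV Cset p V (min (Δ + 1) Δhat)) (C + mV Cset p V 1)

/-- Theorem 2 (threshold in the destination age): if `V(·,c)` is non-decreasing on
`{1,…,Δ̂}` for every `c ∈ 𝒞`, then (i) optimality of scheduling at `(Δ₀,C)` propagates to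
every `Δ₀ ≤ Δ ≤ Δ̂`; consequently (ii) with the threshold
`ψ(C) := min{Δ ∈ {1,…,Δ̂} : C ≤ g_V(Δ)}` (in `ℕ∞`, `min ∅ = +∞`), scheduling is optimal at
`(Δ,C)` if and only if `Δ ≥ ψ(C)`. -/
theorem stmt15 (Δhat : ℕ) (hΔhat : 1 ≤ Δhat)
    (Cset : Finset ℝ) (hCset : ∀ c ∈ Cset, 0 ≤ c)
    (p : ℝ → ℝ) (hp0 : ∀ c ∈ Cset, 0 ≤ p c) (hp1 : ∑ c ∈ Cset, p c = 1)
    (V : ℕ → ℝ → ℝ)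
    (hV : ∀ c ∈ Cset, ∀ Δ Δ' : ℕ, 1 ≤ Δ → Δ ≤ Δ' → Δ' ≤ Δhat → V Δ c ≤ V Δ' c)
    (C : ℝ) (hC : C ∈ Cset) :
    (∀ Δ₀ Δ : ℕ, 1 ≤ Δ₀ → Δ₀ ≤ Δ → Δ ≤ Δhat →
      C ≤ gV Δhat Cset p V Δ₀ → C ≤ gV Δhat Cset p V Δ) ∧
    (∀ Δ : ℕ, 1 ≤ Δ → Δ ≤ Δhat →
      (C ≤ gV Δhat Cset p V Δ ↔
        sInf {d : ℕ∞ | ∃ m : ℕ, d = (m : ℕ∞) ∧ 1 ≤ m ∧ m ≤ Δhat ∧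
          C ≤ gV Δhat Cset p V m} ≤ (Δ : ℕ∞))) := by
  have hmV : ∀ a b : ℕ, 1 ≤ a → a ≤ b → b ≤ Δhat → mV Cset p V a ≤ mV Cset p V b := by
    intro a b ha hab hb
    exact Finset.sum_le_sum fun c hc =>
      mul_le_mul_of_nonneg_left (hV c hc a b ha hab hb) (hp0 c hc)
  have hmono : ∀ Δ₀ Δ : ℕ, 1 ≤ Δ₀ → Δ₀ ≤ Δ → Δ ≤ Δhat →
      C ≤ gV Δhat Cset p V Δ₀ → C ≤ gV Δhat Cset p V Δ := by
    intro Δ₀ Δ h1 h2 h3 hopt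
    refine hopt.trans ?_
    unfold gV
    have := hmV (min (Δ₀ + 1) Δhat) (min (Δ + 1) Δhat)
      (le_min (by omega) hΔhat) (min_le_min (by omega) le_rfl)
      (min_le_right _ _)
    linarith
  refine ⟨hmono, fun Δ h1 h2 => ⟨fun hopt => ?_, fun hinf => ?_⟩⟩
  · exact sInf_le ⟨Δ, rfl, h1, h2, hopt⟩
  · set S : Set ℕ∞ := {d : ℕ∞ | ∃ m : ℕ, d = (m : ℕ∞) ∧ 1 ≤ m ∧ m ≤ Δhat ∧
      C ≤ gV Δhat Cset p V m}
    have hne : S.Nonempty := by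
      by_contra h
      rw [Set.not_nonempty_iff_eq_empty] at h
      rw [h, sInf_empty] at hinf
      exact absurd (le_antisymm le_top hinf) (by simp)
    obtain ⟨m, hm, hm1, hm2, hmC⟩ := csInf_mem hne
    have hmΔ : m ≤ Δ := by
      have := sInf_le (show (m : ℕ∞) ∈ S from ⟨m, rfl, hm1, hm2, hmC⟩)
      rw [hm] at hinf
      exact_mod_cast hinf
    exact hmono m Δ hm1 hmΔ h2 hmC
end

section
/- If V : {1,…,Δ̂} × 𝒞 → ℝ satisfies that V(·, c) is non-decreasing on {1,…,Δ̂} for every c ∈ 𝒞, then the reduced Bellman image T V satisfies that (T V)(·, C) is non-decreasing on {1,…,Δ̂} for every C ∈ 𝒞; moreover, for every fixed Δ, (T V)(Δ, ·) is non-decreasing in C. -/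
open Finset

/-- If `V(·,c)` is non-decreasing on `{1,…,Δ̂}` for every `c ∈ 𝒞`, then the reduced Bellman
image `T V` is non-decreasing in `Δ` on `{1,…,Δ̂}` for every `C ∈ 𝒞`, and for every fixed
`Δ`, `(T V)(Δ,·)` is non-decreasing in the energy cost `C`. -/
theorem stmt17 (Δhat : ℕ) (hΔhat : 1 ≤ Δhat)
    (Cset : Finset ℝ) (hCset : ∀ c ∈ Cset, 0 ≤ c)
    (p : ℝ → ℝ) (hp0 : ∀ c ∈ Cset, 0 ≤ p c) (hp1 : ∑ c ∈ Cset, p c = 1)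
    (V : ℕ → ℝ → ℝ)
    (hV : ∀ c ∈ Cset, ∀ Δ Δ' : ℕ, 1 ≤ Δ → Δ ≤ Δ' → Δ' ≤ Δhat → V Δ c ≤ V Δ' c) :
    (∀ C ∈ Cset, ∀ Δ Δ' : ℕ, 1 ≤ Δ → Δ ≤ Δ' → Δ' ≤ Δhat →
      reducedBellman Δhat Cset p V Δ C ≤ reducedBellman Δhat Cset p V Δ' C) ∧
    (∀ Δ : ℕ, ∀ C C' : ℝ, C ∈ Cset → C' ∈ Cset → C ≤ C' →
      reducedBellman Δhat Cset p V Δ C ≤ reducedBellman Δhat Cset p V Δ C') := by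
  have hmV : ∀ Δ Δ' : ℕ, 1 ≤ Δ → Δ ≤ Δ' → Δ' ≤ Δhat →
      mV Cset p V Δ ≤ mV Cset p V Δ' := by
    intro Δ Δ' h1 h2 h3
    apply Finset.sum_le_sum
    intro c hc
    exact mul_le_mul_of_nonneg_left (hV c hc Δ Δ' h1 h2 h3) (hp0 c hc)
  constructor
  · intro C hC Δ Δ' h1 h2 h3
    unfold reducedBellman
    have hΔ : (Δ : ℝ) ≤ (Δ' : ℝ) := by exact_mod_cast h2
    have hm : mV Cset p V (min (Δ + 1) Δhat) ≤ mV Cset p V (min (Δ' + 1) Δhat) := by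
      apply hmV
      · exact le_min (by omega) hΔhat
      · exact min_le_min (by omega) le_rfl
      · exact min_le_right _ _
    exact add_le_add hΔ (min_le_min hm le_rfl)
  · intro Δ C C' _ _ hCC
    unfold reducedBellman
    exact add_le_add le_rfl (min_le_min le_rfl (by linarith))
end
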